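/- Lebesgue-type decomposition: Let μ_q be a strongly p-adic q-invariant distribution on ℤ_p whose Radon-Nikodym derivative f_{μ_q} is a C¹ function, and let μ_{1,q} = μ_{f_{μ_q}, q} be the strongly p-adic q-invariant distribution associated to f_{μ_q}. Then μ_{2,q} := μ_q − μ_{1,q} is a bounded distribution (hence a p-adic measure) on ℤ_p, so μ_q = μ_{1,q} + μ_{2,q} with μ_{2,q} a measure. -/

import Mathlib

open Filter Finset Topology

set_option linter.unusedSectionVars false

variable {p : ℕ} [hp : Fact p.Prime] {K : Type*} [NontriviallyNormedField K]

/-- The `q`-analogue `[n]_q = (1 - q^n)/(1 - q)` of a natural number `n`. -/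
noncomputable def qNum (q : K) (n : ℕ) : K := (1 - q ^ n) / (1 - q)

/-- `f : ℤ_p → K` is a `C¹` (strictly differentiable) function: the difference quotient
`Δ₁f(m,x) = (f(x+m) - f(x))/m` extends to a continuous function of `(m, x)`. Here
`ι : ℤ_p →+* K` is the (isometric) embedding of `ℤ_p` into `K`. -/
def IsC1 (ι : PadicInt p →+* K) (f : PadicInt p → K) : Prop :=
  ∃ Df : PadicInt p × PadicInt p → K, Continuous Df ∧
    ∀ m x : PadicInt p, m ≠ 0 → Df (m, x) * ι m = f (x + m) - f x

/-- A `K`-valued distribution on `ℤ_p`: `μ x n` is the value on the ball `x + pⁿℤ_p`;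
it depends only on the ball and is finitely additive under splitting a ball of level `n`
into the `p` balls of level `n+1`. -/
def IsDist (μ : PadicInt p → ℕ → K) : Prop :=
  (∀ (x y : PadicInt p) (n : ℕ), ‖x - y‖ ≤ (p : ℝ) ^ (-(n : ℤ)) → μ x n = μ y n) ∧
  ∀ (x : PadicInt p) (n : ℕ),
    μ x n = ∑ i ∈ range p, μ (x + (i : PadicInt p) * (p : PadicInt p) ^ n) (n + 1)

lemma aux_nat_norm (ι : PadicInt p →+* K) (hι : ∀ z, ‖ι z‖ = ‖z‖) (n : ℕ) :
    ‖(n : K)‖ ≤ 1 := by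
  rw [← map_natCast ι n, hι]; exact PadicInt.norm_le_one _

lemma aux_sum_norm_le {α : Type*} (hna : IsNonarchimedean (‖·‖ : K → ℝ))
    (s : Finset α) (f : α → K) {B : ℝ} (hB : 0 ≤ B) (h : ∀ i ∈ s, ‖f i‖ ≤ B) :
    ‖∑ i ∈ s, f i‖ ≤ B := by
  classical
  induction s using Finset.induction with
  | empty => simpa using hB
  | insert a s hx ih =>
    rw [Finset.sum_insert hx]
    refine (hna _ _).trans (max_le (h a (Finset.mem_insert_self a s)) ?_)
    exact ih fun i hi => h i (Finset.mem_insert_of_mem hi)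

lemma aux_binom_tail (hna : IsNonarchimedean (‖·‖ : K → ℝ)) (hpK : ‖(p : K)‖ = (p : ℝ)⁻¹)
    (ι : PadicInt p →+* K) (hι : ∀ z, ‖ι z‖ = ‖z‖) (u : K) (hu : ‖u‖ ≤ 1) :
    ‖(1 + u) ^ p - 1 - p * u‖ ≤ max ((p : ℝ)⁻¹ * ‖u‖ ^ 2) (‖u‖ ^ p) := by
  have hp2 : 2 ≤ p := hp.out.two_le
  have hexp : (1 + u) ^ p = ∑ k ∈ range (p + 1), u ^ k * (p.choose k : K) := by
    rw [add_comm 1 u, add_pow]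
    simp
  have hsplit : (1 + u) ^ p - 1 - p * u = ∑ k ∈ Finset.Ico 2 (p + 1), u ^ k * (p.choose k : K) := by
    rw [hexp, ← Finset.sum_range_add_sum_Ico _ (by omega : 2 ≤ p + 1)]
    simp [Finset.sum_range_succ]
    ring
  rw [hsplit]
  apply aux_sum_norm_le hna
  · exact le_max_of_le_left (by positivity)
  intro k hk
  rw [Finset.mem_Ico] at hk
  rcases eq_or_lt_of_le (Nat.lt_succ_iff.mp hk.2) with hkp | hkp
  · -- k = p
    subst hkp
    refine le_max_of_le_right ?_
    rw [norm_mul, norm_pow]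
    calc ‖u‖ ^ k * ‖((k.choose k : ℕ) : K)‖ ≤ ‖u‖ ^ k * 1 := by
          gcongr; exact aux_nat_norm ι hι _
      _ = ‖u‖ ^ k := mul_one _
  · -- 2 ≤ k < p
    refine le_max_of_le_left ?_
    have hdvd : p ∣ p.choose k := hp.out.dvd_choose_self (by omega) hkp
    obtain ⟨c, hc⟩ := hdvd
    rw [norm_mul, norm_pow, hc]
    push_cast
    rw [norm_mul, hpK]
    have h1 : ‖u‖ ^ k ≤ ‖u‖ ^ 2 := pow_le_pow_of_le_one (norm_nonneg u) hu hk.1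
    have h2 : ‖(c : K)‖ ≤ 1 := aux_nat_norm ι hι _
    have hpinv : (0:ℝ) ≤ (p:ℝ)⁻¹ := by positivity
    calc ‖u‖ ^ k * ((p:ℝ)⁻¹ * ‖(c : K)‖) ≤ ‖u‖ ^ 2 * ((p:ℝ)⁻¹ * 1) :=
          mul_le_mul h1 (mul_le_mul_of_nonneg_left h2 hpinv) (by positivity) (by positivity)
      _ = (p:ℝ)⁻¹ * ‖u‖ ^ 2 := by ring

lemma aux_eq_of_lt (hna : IsNonarchimedean (‖·‖ : K → ℝ)) {a b : K} (h : ‖b‖ < ‖a‖) :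
    ‖a + b‖ = ‖a‖ := by
  refine le_antisymm ((hna a b).trans (max_le le_rfl h.le)) ?_
  have h2 : ‖a‖ ≤ max ‖a + b‖ ‖b‖ := by simpa using hna (a + b) (-b)
  rcases le_max_iff.mp h2 with h3 | h3
  · exact h3
  · exact absurd h3 (not_le.mpr h)

lemma aux_lim_bound (hna : IsNonarchimedean (‖·‖ : K → ℝ)) {a : ℕ → K} {L : K} {c : ℝ}
    (hc : 0 ≤ c) (hL : Tendsto a atTop (𝓝 L)) (hd : ∀ m, ‖a m - a (m + 1)‖ ≤ c) :
    ‖a 0 - L‖ ≤ c := by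
  have key : ∀ m, ‖a 0 - a m‖ ≤ c := by
    intro m
    induction m with
    | zero => simpa using hc
    | succ m ih =>
      have h : a 0 - a (m + 1) = (a 0 - a m) + (a m - a (m + 1)) := by ring
      rw [h]
      exact (hna _ _).trans (max_le ih (hd m))
  exact le_of_tendsto ((tendsto_const_nhds.sub hL).norm) (Eventually.of_forall key)

lemma aux_sum_range_mul {M : Type*} [AddCommMonoid M] (f : ℕ → M) (a b : ℕ) :
    ∑ i ∈ range (a * b), f i = ∑ k ∈ range a, ∑ j ∈ range b, f (k * b + j) := by
  induction a with
  | zero => simp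
  | succ a ih =>
    rw [Nat.succ_mul, Finset.sum_range_add, ih, Finset.sum_range_succ]

lemma aux_rpow_pow : ((p : ℝ) ^ (-1 / ((p : ℝ) - 1))) ^ (p - 1) = (p : ℝ)⁻¹ := by
  have hp2 : 2 ≤ p := hp.out.two_le
  have hpos : (0 : ℝ) < p := by positivity
  have hne : (p : ℝ) - 1 ≠ 0 := by
    have : (2 : ℝ) ≤ p := by exact_mod_cast hp2
    linarith
  rw [← Real.rpow_natCast ((p : ℝ) ^ (-1 / ((p : ℝ) - 1))) (p - 1), ← Real.rpow_mul hpos.le]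
  have hcast : ((p - 1 : ℕ) : ℝ) = (p : ℝ) - 1 := by
    have : 1 ≤ p := hp.out.one_lt.le
    push_cast [Nat.cast_sub this]
    ring
  rw [hcast, div_mul_cancel₀, Real.rpow_neg_one]
  exact hne

lemma aux_rpow_lt_one : (p : ℝ) ^ (-1 / ((p : ℝ) - 1)) < 1 := by
  have hp1 : (1 : ℝ) < p := by exact_mod_cast hp.out.one_lt
  apply Real.rpow_lt_one_of_one_lt_of_neg hp1
  have h : (0:ℝ) < (p:ℝ) - 1 := by linarith
  rw [neg_div]
  exact neg_neg_iff_pos.mpr (by positivity)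

/-- `‖(1+s)^p - 1‖ = p⁻¹ ‖s‖` for small `s`. -/
lemma aux_pow_norm (hna : IsNonarchimedean (‖·‖ : K → ℝ)) (hpK : ‖(p : K)‖ = (p : ℝ)⁻¹)
    (ι : PadicInt p →+* K) (hι : ∀ z, ‖ι z‖ = ‖z‖) {s : K}
    (hs : ‖s‖ < (p : ℝ) ^ (-1 / ((p : ℝ) - 1))) :
    ‖(1 + s) ^ p - 1‖ = (p : ℝ)⁻¹ * ‖s‖ := by
  have hp2 : 2 ≤ p := hp.out.two_le
  have hs1 : ‖s‖ < 1 := hs.trans aux_rpow_lt_one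
  rcases eq_or_ne s 0 with rfl | hs0
  · simp
  have hsn : 0 < ‖s‖ := norm_pos_iff.mpr hs0
  have hpinv : (0:ℝ) < (p:ℝ)⁻¹ := by positivity
  set R := (1 + s) ^ p - 1 - p * s with hR
  have hRle : ‖R‖ ≤ max ((p : ℝ)⁻¹ * ‖s‖ ^ 2) (‖s‖ ^ p) :=
    aux_binom_tail hna hpK ι hι s hs1.le
  have hRlt : ‖R‖ < ‖(p : K) * s‖ := by
    rw [norm_mul, hpK]
    refine hRle.trans_lt (max_lt ?_ ?_)
    · have : ‖s‖ ^ 2 < ‖s‖ := by nlinarith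
      nlinarith
    · have h1 : ‖s‖ ^ (p - 1) < (p:ℝ)⁻¹ := by
        calc ‖s‖ ^ (p - 1) < ((p : ℝ) ^ (-1 / ((p : ℝ) - 1))) ^ (p - 1) := by
              apply pow_lt_pow_left₀ hs (norm_nonneg s) (by omega)
          _ = (p:ℝ)⁻¹ := aux_rpow_pow
      calc ‖s‖ ^ p = ‖s‖ ^ (p - 1) * ‖s‖ := by
            rw [← pow_succ]
            congr 1
            omega
        _ < (p:ℝ)⁻¹ * ‖s‖ := by nlinarith
  have hdecomp : (1 + s) ^ p - 1 = (p : K) * s + R := by rw [hR]; ring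
  rw [hdecomp, aux_eq_of_lt hna hRlt, norm_mul, hpK]

lemma aux_qpow_norm (hna : IsNonarchimedean (‖·‖ : K → ℝ)) (hpK : ‖(p : K)‖ = (p : ℝ)⁻¹)
    (ι : PadicInt p →+* K) (hι : ∀ z, ‖ι z‖ = ‖z‖) {q : K}
    (hq : ‖1 - q‖ < (p : ℝ) ^ (-1 / ((p : ℝ) - 1))) (n : ℕ) :
    ‖q ^ p ^ n - 1‖ = ((p : ℝ)⁻¹) ^ n * ‖q - 1‖ := by
  have hq' : ‖q - 1‖ < (p : ℝ) ^ (-1 / ((p : ℝ) - 1)) := by rwa [norm_sub_rev]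
  have hr1 : (0:ℝ) ≤ (p:ℝ)⁻¹ := by positivity
  have hrle : (p:ℝ)⁻¹ ≤ 1 := by
    have : (1:ℝ) ≤ p := by exact_mod_cast hp.out.one_lt.le
    exact inv_le_one_of_one_le₀ this
  induction n with
  | zero => simp
  | succ n ih =>
    have hsmall : ‖q ^ p ^ n - 1‖ < (p : ℝ) ^ (-1 / ((p : ℝ) - 1)) := by
      rw [ih]
      calc ((p : ℝ)⁻¹) ^ n * ‖q - 1‖ ≤ 1 * ‖q - 1‖ := by
            apply mul_le_mul_of_nonneg_right (pow_le_one₀ hr1 hrle) (norm_nonneg _)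
        _ = ‖q - 1‖ := one_mul _
        _ < _ := hq'
    have hqeq : q ^ p ^ (n + 1) = (1 + (q ^ p ^ n - 1)) ^ p := by
      rw [pow_succ, pow_mul]
      ring_nf
    rw [hqeq, aux_pow_norm hna hpK ι hι hsmall, ih, pow_succ]
    ring

lemma aux_qNum_norm (hna : IsNonarchimedean (‖·‖ : K → ℝ)) (hpK : ‖(p : K)‖ = (p : ℝ)⁻¹)
    (ι : PadicInt p →+* K) (hι : ∀ z, ‖ι z‖ = ‖z‖) {q : K}
    (hq : ‖1 - q‖ < (p : ℝ) ^ (-1 / ((p : ℝ) - 1))) (hq1 : q ≠ 1) (n : ℕ) :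
    ‖qNum q (p ^ n)‖ = ((p : ℝ)⁻¹) ^ n := by
  have hne : ‖q - 1‖ ≠ 0 := by
    simpa [sub_eq_zero] using hq1
  rw [qNum, norm_div, norm_sub_rev 1 (q ^ p ^ n), norm_sub_rev 1 q,
    aux_qpow_norm hna hpK ι hι hq n, mul_div_assoc, div_self hne, mul_one]

lemma aux_pA_bound (hna : IsNonarchimedean (‖·‖ : K → ℝ)) (hpK : ‖(p : K)‖ = (p : ℝ)⁻¹)
    (ι : PadicInt p →+* K) (hι : ∀ z, ‖ι z‖ = ‖z‖) {q : K}
    (hq : ‖1 - q‖ < (p : ℝ) ^ (-1 / ((p : ℝ) - 1))) (hq1 : q ≠ 1) (M : ℕ) :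
    ‖(p : K) * qNum q (p ^ M) - qNum q (p ^ (M + 1))‖ ≤ ((p : ℝ)⁻¹) ^ (2 * M) * ‖q - 1‖ := by
  have hp2 : 2 ≤ p := hp.out.two_le
  have hqne : (1 : K) - q ≠ 0 := sub_ne_zero.mpr (Ne.symm hq1)
  have hne : ‖q - 1‖ ≠ 0 := by simpa [sub_eq_zero] using hq1
  have hq' : ‖q - 1‖ < (p : ℝ) ^ (-1 / ((p : ℝ) - 1)) := by rwa [norm_sub_rev]
  set u := q ^ p ^ M - 1 with hu
  have hr1 : (0:ℝ) ≤ (p:ℝ)⁻¹ := by positivity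
  have hrle : (p:ℝ)⁻¹ ≤ 1 := by
    have h1 : (1:ℝ) ≤ p := by exact_mod_cast hp.out.one_lt.le
    exact inv_le_one_of_one_le₀ h1
  have hunorm : ‖u‖ = ((p : ℝ)⁻¹) ^ M * ‖q - 1‖ := aux_qpow_norm hna hpK ι hι hq M
  have hu1 : ‖u‖ ≤ 1 := by
    rw [hunorm]
    calc ((p : ℝ)⁻¹) ^ M * ‖q - 1‖ ≤ 1 * 1 :=
          mul_le_mul (pow_le_one₀ hr1 hrle) (hq'.le.trans aux_rpow_lt_one.le)
            (norm_nonneg _) zero_le_one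
      _ = 1 := one_mul 1
  have hpow : q ^ p ^ (M + 1) = (1 + u) ^ p := by
    have h1 : (1 : K) + u = q ^ p ^ M := by rw [hu]; ring
    rw [h1, ← pow_mul, ← pow_succ]
  have hkey : ((p : K) * qNum q (p ^ M) - qNum q (p ^ (M + 1))) * (1 - q)
      = (1 + u) ^ p - 1 - p * u := by
    rw [qNum, qNum, hpow, hu]
    field_simp
    ring
  have htail : ‖(1 + u) ^ p - 1 - (p : K) * u‖ ≤ ‖u‖ ^ 2 := by
    refine (aux_binom_tail hna hpK ι hι u hu1).trans (max_le ?_ ?_)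
    · exact mul_le_of_le_one_left (by positivity) hrle
    · exact pow_le_pow_of_le_one (norm_nonneg u) hu1 hp2
  have hmul : ‖(p : K) * qNum q (p ^ M) - qNum q (p ^ (M + 1))‖ * ‖q - 1‖ ≤ ‖u‖ ^ 2 := by
    calc ‖(p : K) * qNum q (p ^ M) - qNum q (p ^ (M + 1))‖ * ‖q - 1‖
        = ‖(p : K) * qNum q (p ^ M) - qNum q (p ^ (M + 1))‖ * ‖1 - q‖ := by
          rw [norm_sub_rev q 1]
      _ = ‖((p : K) * qNum q (p ^ M) - qNum q (p ^ (M + 1))) * (1 - q)‖ := (norm_mul _ _).symm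
      _ = ‖(1 + u) ^ p - 1 - (p : K) * u‖ := by rw [hkey]
      _ ≤ ‖u‖ ^ 2 := htail
  have hpos : (0:ℝ) < ‖q - 1‖ := lt_of_le_of_ne (norm_nonneg _) (Ne.symm hne)
  refine le_of_mul_le_mul_right ?_ hpos
  calc ‖(p : K) * qNum q (p ^ M) - qNum q (p ^ (M + 1))‖ * ‖q - 1‖
      ≤ ‖u‖ ^ 2 := hmul
    _ = ((p : ℝ)⁻¹) ^ (2 * M) * ‖q - 1‖ * ‖q - 1‖ := by rw [hunorm]; ring

/-- Theorem 4, Lebesgue-type decomposition: if `μ_q` is a strongly p-adic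
q-invariant distribution whose Radon-Nikodym derivative `f_{μ_q}` is C¹, and `μ_{1,q}` is the
strongly invariant distribution associated to `f_{μ_q}`, then `μ_{2,q} = μ_q − μ_{1,q}` is
bounded on all balls, hence a measure, and `μ_q = μ_{1,q} + μ_{2,q}`. -/
theorem lebesgue_decomposition
(q : K) (hna : IsNonarchimedean (‖·‖ : K → ℝ)) (hpK : ‖(p : K)‖ = (p : ℝ)⁻¹)
    (hq : ‖1 - q‖ < (p : ℝ) ^ (-1 / ((p : ℝ) - 1))) (hq1 : q ≠ 1)
    (ι : PadicInt p →+* K) (hι : ∀ z, ‖ι z‖ = ‖z‖)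
    (μ : PadicInt p → ℕ → K) (hdist : IsDist μ)
    (hstrong : ∃ C : ℝ, 0 < C ∧ ∀ (x : PadicInt p) (n : ℕ),
      ‖qNum q (p ^ n) * μ x n - qNum q (p ^ (n + 1)) * μ x (n + 1)‖ ≤ C * (p : ℝ) ^ (-(n : ℤ)))
    (fμ : PadicInt p → K)
    (hfμ : ∀ x, Tendsto (fun N => qNum q (p ^ N) * μ x N) atTop (𝓝 (fμ x)))
    (hC1 : IsC1 ι fμ)
    (μ1 : PadicInt p → ℕ → K)
    (hμ1 : ∀ (x : PadicInt p) (n : ℕ), Tendsto (fun m => (qNum q (p ^ (m + n)))⁻¹ *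
      ∑ i ∈ range (p ^ m), fμ (x + (p : PadicInt p) ^ n * (i : PadicInt p))) atTop (𝓝 (μ1 x n))) :
    ∃ M : ℝ, 0 < M ∧ ∀ (x : PadicInt p) (n : ℕ), ‖μ x n - μ1 x n‖ ≤ M := by
  classical
  obtain ⟨C, hC, hs⟩ := hstrong
  obtain ⟨Df, hDfc, hDf⟩ := hC1
  obtain ⟨B, hBmem⟩ := (isCompact_range (continuous_norm.comp hDfc)).bddAbove
  have hDfB : ∀ z, ‖Df z‖ ≤ B := fun z => hBmem (Set.mem_range_self z)
  have hB : 0 ≤ B := (norm_nonneg (Df (0, 0))).trans (hDfB (0, 0))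
  set F := ‖fμ 0‖ + B with hFdef
  have hF : 0 ≤ F := by positivity
  have hBF : B ≤ F := by rw [hFdef]; linarith [norm_nonneg (fμ (0 : PadicInt p))]
  have hfB : ∀ y, ‖fμ y‖ ≤ F := by
    intro y
    rcases eq_or_ne y 0 with rfl | hy
    · rw [hFdef]; nlinarith [norm_nonneg (fμ (0 : PadicInt p))]
    · have hd := hDf y 0 hy
      rw [zero_add] at hd
      have : fμ y = fμ 0 + Df (y, 0) * ι y := by rw [hd]; ring
      rw [this]
      calc ‖fμ 0 + Df (y, 0) * ι y‖ ≤ ‖fμ 0‖ + ‖Df (y, 0) * ι y‖ := norm_add_le _ _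
        _ ≤ ‖fμ 0‖ + B := by
            have : ‖Df (y, 0) * ι y‖ ≤ B * 1 := by
              rw [norm_mul, hι]
              exact mul_le_mul (hDfB _) (PadicInt.norm_le_one y) (norm_nonneg _) hB
            rw [mul_one] at this
            linarith
        _ = F := hFdef.symm
  set r := (p : ℝ)⁻¹ with hrdef
  have hp0 : (0:ℝ) < p := by exact_mod_cast hp.out.pos
  have hr0 : 0 < r := by positivity
  have hr1 : r ≤ 1 := by
    have h1 : (1:ℝ) ≤ p := by exact_mod_cast hp.out.one_lt.le
    exact inv_le_one_of_one_le₀ h1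
  have hrinv : r⁻¹ = (p:ℝ) := by rw [hrdef, inv_inv]
  have hA : ∀ k, ‖qNum q (p ^ k)‖ = r ^ k := fun k => aux_qNum_norm hna hpK ι hι hq hq1 k
  have hAne : ∀ k, qNum q (p ^ k) ≠ 0 := fun k =>
    norm_ne_zero_iff.mp (by rw [hA k]; positivity)
  have hq1n : ‖q - 1‖ ≤ 1 := by
    rw [norm_sub_rev]
    exact hq.le.trans aux_rpow_lt_one.le
  refine ⟨C + p * F + 1, by positivity, ?_⟩
  intro x n
  -- Part 1 : ‖A_n μ x n - fμ x‖ ≤ C r^n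
  have h1 : ‖qNum q (p ^ n) * μ x n - fμ x‖ ≤ C * r ^ n := by
    have hlim : Tendsto (fun m => qNum q (p ^ (m + n)) * μ x (m + n)) atTop (𝓝 (fμ x)) :=
      (hfμ x).comp (tendsto_add_atTop_nat n)
    have hd : ∀ m, ‖qNum q (p ^ (m + n)) * μ x (m + n)
        - qNum q (p ^ (m + 1 + n)) * μ x (m + 1 + n)‖ ≤ C * r ^ n := by
      intro m
      have hidx : m + 1 + n = (m + n) + 1 := by omega
      rw [hidx]
      have hz : (p:ℝ) ^ (-((m + n : ℕ) : ℤ)) = r ^ (m + n) := by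
        rw [zpow_neg, zpow_natCast, hrdef, inv_pow]
      calc ‖qNum q (p ^ (m + n)) * μ x (m + n)
            - qNum q (p ^ ((m + n) + 1)) * μ x ((m + n) + 1)‖
          ≤ C * (p:ℝ) ^ (-((m + n : ℕ) : ℤ)) := hs x (m + n)
        _ = C * (r ^ m * r ^ n) := by rw [hz, pow_add]
        _ ≤ C * (1 * r ^ n) := by
            apply mul_le_mul_of_nonneg_left _ hC.le
            apply mul_le_mul_of_nonneg_right (pow_le_one₀ hr0.le hr1) (by positivity)
        _ = C * r ^ n := by rw [one_mul]
    have := aux_lim_bound hna (by positivity) hlim hd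
    simpa using this
  -- Part 2 : ‖fμ x - A_n μ1 x n‖ ≤ p F r^n
  set S : ℕ → K := fun m => ∑ i ∈ range (p ^ m),
    fμ (x + (p : PadicInt p) ^ n * (i : PadicInt p)) with hSdef
  set c : ℕ → K := fun m => qNum q (p ^ n) * ((qNum q (p ^ (m + n)))⁻¹ * S m) with hcdef
  have hclim : Tendsto c atTop (𝓝 (qNum q (p ^ n) * μ1 x n)) :=
    (hμ1 x n).const_mul _
  have hc0 : c 0 = fμ x := by
    have hS0 : S 0 = fμ x := by
      rw [hSdef]
      simp
    rw [hcdef]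
    simp only [zero_add, hS0]
    rw [← mul_assoc, mul_inv_cancel₀ (hAne n), one_mul]
  have hSle : ∀ m, ‖S m‖ ≤ F := fun m => aux_sum_norm_le hna _ _ hF (fun i _ => hfB _)
  have hcd : ∀ m, ‖c m - c (m + 1)‖ ≤ (p * F) * r ^ n := by
    intro m
    have hMne : qNum q (p ^ (m + n)) ≠ 0 := hAne _
    have hM1ne : qNum q (p ^ (m + 1 + n)) ≠ 0 := hAne _
    have hidx : m + 1 + n = (m + n) + 1 := by omega
    set E := S (m + 1) - (p : K) * S m with hE
    have hEle : ‖E‖ ≤ B * r ^ (n + m) := by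
      have hsplit : S (m + 1) = ∑ k ∈ range p, ∑ j ∈ range (p ^ m),
          fμ (x + (p : PadicInt p) ^ n * ((k * p ^ m + j : ℕ) : PadicInt p)) := by
        have hpm : p ^ (m + 1) = p * p ^ m := by ring
        show (∑ i ∈ range (p ^ (m + 1)),
          fμ (x + (p : PadicInt p) ^ n * (i : PadicInt p))) = _
        rw [hpm, aux_sum_range_mul]
      have hpS : (p : K) * S m = ∑ _k ∈ range p, S m := by
        rw [Finset.sum_const, Finset.card_range, nsmul_eq_mul]
      have hEeq : E = ∑ k ∈ range p, ∑ j ∈ range (p ^ m),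
          (fμ (x + (p : PadicInt p) ^ n * ((k * p ^ m + j : ℕ) : PadicInt p))
            - fμ (x + (p : PadicInt p) ^ n * (j : PadicInt p))) := by
        rw [hE, hsplit, hpS, ← Finset.sum_sub_distrib]
        exact Finset.sum_congr rfl fun k _ => (Finset.sum_sub_distrib _ _).symm
      rw [hEeq]
      refine aux_sum_norm_le hna _ _ (by positivity) ?_
      intro k hk
      refine aux_sum_norm_le hna _ _ (by positivity) ?_
      intro j hj
      rcases Nat.eq_zero_or_pos k with rfl | hkpos
      · simp only [zero_mul, zero_add, sub_self, norm_zero]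
        positivity
      · have hkp : k < p := Finset.mem_range.mp hk
        have hcast : x + (p : PadicInt p) ^ n * ((k * p ^ m + j : ℕ) : PadicInt p)
            = (x + (p : PadicInt p) ^ n * (j : PadicInt p))
              + (p : PadicInt p) ^ (n + m) * (k : PadicInt p) := by
          push_cast
          ring
        have hne0 : (p : PadicInt p) ^ (n + m) * (k : PadicInt p) ≠ 0 := by
          apply mul_ne_zero (pow_ne_zero _ ?_) ?_
          · exact_mod_cast (Nat.cast_ne_zero (R := PadicInt p)).mpr hp.out.ne_zero
          · exact Nat.cast_ne_zero.mpr (by omega)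
        have hder := hDf ((p : PadicInt p) ^ (n + m) * (k : PadicInt p))
          (x + (p : PadicInt p) ^ n * (j : PadicInt p)) hne0
        rw [hcast, ← hder, norm_mul, hι]
        have hhn : ‖(p : PadicInt p) ^ (n + m) * (k : PadicInt p)‖ ≤ r ^ (n + m) := by
          rw [norm_mul]
          calc ‖(p : PadicInt p) ^ (n + m)‖ * ‖(k : PadicInt p)‖
              ≤ r ^ (n + m) * 1 := by
                apply mul_le_mul _ (PadicInt.norm_le_one _) (norm_nonneg _) (by positivity)
                rw [PadicInt.norm_p_pow, zpow_neg, zpow_natCast, hrdef, inv_pow]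
            _ = r ^ (n + m) := mul_one _
        exact mul_le_mul (hDfB _) hhn (norm_nonneg _) hB
    have hS1 : S (m + 1) = (p : K) * S m + E := by rw [hE]; ring
    have halg : c m - c (m + 1) = qNum q (p ^ n) * S m
          * ((qNum q (p ^ (m + 1 + n)) - (p : K) * qNum q (p ^ (m + n)))
            * ((qNum q (p ^ (m + n)))⁻¹ * (qNum q (p ^ (m + 1 + n)))⁻¹))
        + (-(qNum q (p ^ n) * (qNum q (p ^ (m + 1 + n)))⁻¹)) * E := by
      show qNum q (p ^ n) * ((qNum q (p ^ (m + n)))⁻¹ * S m)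
          - qNum q (p ^ n) * ((qNum q (p ^ (m + 1 + n)))⁻¹ * S (m + 1)) = _
      rw [hS1]
      field_simp
      ring
    rw [halg]
    have hpA : ‖qNum q (p ^ (m + 1 + n)) - (p : K) * qNum q (p ^ (m + n))‖
        ≤ r ^ (2 * (m + n)) * ‖q - 1‖ := by
      rw [norm_sub_rev, hidx]
      exact aux_pA_bound hna hpK ι hι hq hq1 (m + n)
    have hpowA : r ^ (2 * (m + n)) * ((r ^ (m + n))⁻¹ * (r ^ (m + 1 + n))⁻¹) = (p : ℝ) := by
      have h1 : r ^ (m + 1 + n) = r ^ (m + n) * r := by rw [hidx, pow_succ]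
      rw [h1, two_mul, pow_add, ← hrinv]
      field_simp
    refine (hna _ _).trans (max_le ?_ ?_)
    · calc ‖qNum q (p ^ n) * S m * ((qNum q (p ^ (m + 1 + n)) - (p : K) * qNum q (p ^ (m + n)))
            * ((qNum q (p ^ (m + n)))⁻¹ * (qNum q (p ^ (m + 1 + n)))⁻¹))‖
          = ‖qNum q (p ^ n)‖ * ‖S m‖
            * (‖qNum q (p ^ (m + 1 + n)) - (p : K) * qNum q (p ^ (m + n))‖
              * (‖qNum q (p ^ (m + n))‖⁻¹ * ‖qNum q (p ^ (m + 1 + n))‖⁻¹)) := by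
            rw [norm_mul, norm_mul, norm_mul, norm_mul, norm_inv, norm_inv]
        _ ≤ r ^ n * F * ((r ^ (2 * (m + n)) * ‖q - 1‖)
              * ((r ^ (m + n))⁻¹ * (r ^ (m + 1 + n))⁻¹)) := by
            rw [hA n, hA (m + n), hA (m + 1 + n)]
            gcongr
            exact hSle m
        _ = (F * ‖q - 1‖ * r ^ n)
              * (r ^ (2 * (m + n)) * ((r ^ (m + n))⁻¹ * (r ^ (m + 1 + n))⁻¹)) := by ring
        _ = (F * ‖q - 1‖ * r ^ n) * (p : ℝ) := by rw [hpowA]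
        _ ≤ (F * 1 * r ^ n) * (p : ℝ) := by gcongr
        _ = (p * F) * r ^ n := by ring
    · calc ‖(-(qNum q (p ^ n) * (qNum q (p ^ (m + 1 + n)))⁻¹)) * E‖
          = ‖qNum q (p ^ n)‖ * ‖qNum q (p ^ (m + 1 + n))‖⁻¹ * ‖E‖ := by
            rw [norm_mul, norm_neg, norm_mul, norm_inv]
        _ ≤ r ^ n * (r ^ (m + 1 + n))⁻¹ * (B * r ^ (n + m)) := by
            rw [hA n, hA (m + 1 + n)]
            gcongr
        _ = B * (r ^ (n + m) * (r ^ (m + 1 + n))⁻¹) * r ^ n := by ring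
        _ = B * (p : ℝ) * r ^ n := by
            congr 1
            congr 1
            have h1 : r ^ (m + 1 + n) = r ^ (n + m) * r := by
              rw [show m + 1 + n = (n + m) + 1 from by omega, pow_succ]
            rw [h1, ← hrinv]
            field_simp
        _ ≤ F * (p : ℝ) * r ^ n := by gcongr
        _ = (p * F) * r ^ n := by ring
  have h2 : ‖fμ x - qNum q (p ^ n) * μ1 x n‖ ≤ (p * F) * r ^ n := by
    have := aux_lim_bound hna (by positivity) hclim hcd
    rwa [hc0] at this
  -- Combine
  have hfinal : μ x n - μ1 x n = (qNum q (p ^ n))⁻¹ *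
      ((qNum q (p ^ n) * μ x n - fμ x) + (fμ x - qNum q (p ^ n) * μ1 x n)) := by
    have hn0 := hAne n
    field_simp
    ring
  calc ‖μ x n - μ1 x n‖
      = (r ^ n)⁻¹ * ‖(qNum q (p ^ n) * μ x n - fμ x) + (fμ x - qNum q (p ^ n) * μ1 x n)‖ := by
        rw [hfinal, norm_mul, norm_inv, hA n]
    _ ≤ (r ^ n)⁻¹ * ((C + p * F) * r ^ n) := by
        apply mul_le_mul_of_nonneg_left _ (by positivity)
        refine (hna _ _).trans (max_le ?_ ?_)
        · refine h1.trans ?_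
          apply mul_le_mul_of_nonneg_right _ (by positivity)
          nlinarith
        · refine h2.trans ?_
          apply mul_le_mul_of_nonneg_right _ (by positivity)
          nlinarith
    _ = C + p * F := by field_simp
    _ ≤ C + p * F + 1 := by linarith
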